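/- arXiv:1703.07351 — 2 statements merged into one kernel-verified Lean document; each statement's English description precedes it below -/
import Mathlib

section
/- If a DTMC D violates the bounded-until probability threshold, i.e., Pr_D(φ1 U^{≤k} φ2) > p with p ≥ 0, then there exists a finite set Π of finite paths of D, each of length at most k, such that each path in Π satisfies φ1 U^{≤k} φ2, the paths are pairwise non-prefix (no path is a proper prefix of another), and the sum of their path probabilities exceeds p. -/
/-- Probability of a finite path in a DTMC: product of the transition probabilities of
consecutive states. -/
def chainProb {S : Type*} (D : S → S → ℝ) : List S → ℝ
  | [] => 1
  | [_] => 1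
  | s :: s' :: r => D s s' * chainProb D (s' :: r)

/-- A finite state sequence satisfies the bounded until `φ1 U^{≤k} φ2`: some position
`i ≤ k` satisfies `φ2` and all earlier positions satisfy `φ1`. -/
def SatU {S : Type*} (φ1 φ2 : S → Prop) (k : ℕ) (l : List S) : Prop :=
  ∃ i : Fin l.length, i.1 ≤ k ∧ φ2 (l.get i) ∧ ∀ j : Fin l.length, j.1 < i.1 → φ1 (l.get j)

/-- Prefix-minimal satisfaction of the bounded until: the path satisfies it and no
proper prefix does. -/
def MinSat {S : Type*} (φ1 φ2 : S → Prop) (k : ℕ) (l : List S) : Prop :=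
  SatU φ1 φ2 k l ∧ ∀ l' : List S, l' <+: l → l' ≠ l → ¬ SatU φ1 φ2 k l'


private lemma chainProb_nonneg {S : Type*} (D : S → S → ℝ) (h : ∀ s s', 0 ≤ D s s') :
    ∀ l, 0 ≤ chainProb D l
  | [] => zero_le_one
  | [_] => zero_le_one
  | s :: s' :: r => mul_nonneg (h s s') (chainProb_nonneg D h (s' :: r))

private lemma minSat_length {S : Type*} {φ1 φ2 : S → Prop} {k : ℕ} {l : List S}
    (h : MinSat φ1 φ2 k l) : l.length ≤ k + 1 := by
  by_contra hl
  push_neg at hl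
  obtain ⟨⟨i, hi⟩, hik, h2, h1⟩ := h.1
  have hik' : i ≤ k := hik
  refine h.2 (l.take (k+1)) (List.take_prefix _ _) ?_ ?_
  · intro heq
    have := congrArg List.length heq
    simp [List.length_take] at this
    omega
  · refine ⟨⟨i, ?_⟩, hik', ?_, ?_⟩
    · simp [List.length_take]; omega
    · simpa [List.get_eq_getElem, List.getElem_take] using h2
    · rintro ⟨j, hj⟩ hji
      have := h1 ⟨j, by simp [List.length_take] at hj; omega⟩ hji
      simpa [List.get_eq_getElem, List.getElem_take] using this

/-- if a DTMC `D` violates the bounded-until probability threshold,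
`Pr_D(φ1 U^{≤k} φ2) > p ≥ 0` (where `Pr_D` is the total probability of the
prefix-minimal satisfying paths from the initial state), then there is a finite set of
satisfying paths of length at most `k`, pairwise non-prefix, whose probabilities sum to
more than `p`. -/
theorem counterexample_exists {S : Type*} [Fintype S]
    (D : S → S → ℝ) (shat : S) (φ1 φ2 : S → Prop) (k : ℕ) (p : ℝ)
    (hD0 : ∀ s s', 0 ≤ D s s') (hD1 : ∀ s, ∑ s', D s s' = 1) (hp : 0 ≤ p)
    (hviol : p < ∑' l : {l : List S // l.head? = some shat ∧ MinSat φ1 φ2 k l},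
      chainProb D l.1) :
    ∃ C : Finset (List S),
      (∀ l ∈ C, l.head? = some shat ∧ l.length ≤ k + 1 ∧ SatU φ1 φ2 k l) ∧
      (∀ l ∈ C, ∀ l' ∈ C, l ≠ l' → ¬ l <+: l') ∧
      p < ∑ l ∈ C, chainProb D l := by
  set T := {l : List S // l.head? = some shat ∧ MinSat φ1 φ2 k l}
  set f : T → ℝ := fun l => chainProb D l.1 with hf
  have hs : Summable f := by
    by_contra h
    rw [tsum_eq_zero_of_not_summable h] at hviol
    linarith
  obtain ⟨F, hF⟩ := (hs.hasSum.eventually (eventually_gt_nhds hviol)).exists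
  refine ⟨F.map ⟨Subtype.val, Subtype.val_injective⟩, ?_, ?_, ?_⟩
  · intro l hl
    rw [Finset.mem_map] at hl
    obtain ⟨a, _, rfl⟩ := hl
    exact ⟨a.2.1, minSat_length a.2.2, a.2.2.1⟩
  · intro l hl l' hl' hne hpre
    rw [Finset.mem_map] at hl hl'
    obtain ⟨a, _, rfl⟩ := hl
    obtain ⟨b, _, rfl⟩ := hl'
    exact b.2.2.2 a.1 hpre hne a.2.2.1
  · rw [Finset.sum_map]
    exact hF
end

section
/- The L* algorithm's hypothesis sizes are monotone and bounded: if every hypothesis DFA produced by L* is consistent with the observation table and each counterexample strictly increases the number of distinct row-equivalence classes of the observation table, and the target language is accepted by a DFA with n states, then L* makes at most n - 1 conjectures before producing a DFA accepting the target language. -/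
/-- the L* algorithm makes at most `n - 1` conjectures.  If `r i` denotes
the number of distinct row-equivalence classes of the observation table at the `i`-th
conjecture, each failed conjecture (counterexample) strictly increases `r`, the table
always has at least one row class, and the target language is accepted by a DFA with
`n` states (so `r i ≤ n` by Myhill–Nerode), then some conjecture among the first
`n - 1` is correct, i.e. L* produces a DFA accepting the target language after at most
`n - 1` conjectures. -/
theorem lstar_at_most_n_minus_one_conjectures
    (n : ℕ) (hn : 1 ≤ n) (r : ℕ → ℕ) (correct : ℕ → Prop)
    (h0 : 1 ≤ r 0)
    (hbound : ∀ i, r i ≤ n)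
    (hinc : ∀ i, ¬ correct i → r i < r (i + 1)) :
    ∃ i, i ≤ n - 1 ∧ correct i := by
  by_contra h
  push_neg at h
  have key : ∀ i, i ≤ n - 1 → 1 + i ≤ r i := by
    intro i
    induction i with
    | zero => intro _; simpa using h0
    | succ k ih =>
      intro hk
      have hk' : k ≤ n - 1 := Nat.le_of_succ_le hk
      have h1 := ih hk'
      have h2 := hinc k (h k hk')
      omega
  have h1 := key (n - 1) le_rfl
  have h2 := hinc (n - 1) (h (n - 1) le_rfl)
  have h3 := hbound (n - 1 + 1)
  omega
end
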